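/- arXiv:2203.13873 — 4 statements merged into one kernel-verified Lean document; each statement's English description precedes it below -/
import Mathlib

section
/- Let $n \geq 1$ and $0 < \theta < 1$. Let $\nu$ be a probability measure on the unit sphere $S^{2n+1} \subset \mathbb{C}^{n+1}$ supported on countably many points $x_1, x_2, \ldots$ with weights $\nu_i > 0$, and suppose that $\int z_j \, d\nu = 0$, $\int z_j \bar z_k \, d\nu = 0$ for $j \neq k$, and $\int |z_j|^2 \, d\nu = \frac{1}{n+1}$, for all complex coordinate functions $z_1, \ldots, z_{n+1}$. Then $\sum_i \nu_i^{\theta} \geq (n+2)^{1-\theta}$. -/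
/-!
The moment conditions say that the functions `1, √(n+1) z₁, …, √(n+1) z_{n+1}` are orthonormal in
`L²(ν)`. As `ν` is atomic, multiplying them by `√ν` gives `n + 2` orthonormal vectors of `ℓ²`, and
Bessel's inequality against the basis vector `e_i` yields `(n + 2) νᵢ ≤ 1`. Hence
`(n + 2)^(1-θ) νᵢ = ((n + 2) νᵢ)^(1-θ) νᵢ^θ ≤ νᵢ^θ`, and summing over `i` gives the bound.
-/

open scoped ComplexConjugate

section WeightedBessel

variable {𝕜 α : Type*} [RCLike 𝕜] {ν : α → ℝ}

theorem Orthonormal.sum_norm_sq_apply_le {ι : Type*} {v : ι → lp (fun _ : α => 𝕜) 2}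
    (hv : Orthonormal 𝕜 v) (s : Finset ι) (a : α) : ∑ j ∈ s, ‖v j a‖ ^ 2 ≤ 1 := by
  classical
  simpa [lp.inner_single_right, lp.norm_single] using
    hv.sum_inner_products_le (s := s) (lp.single 2 a (1 : 𝕜))

theorem memℓp_sqrt_mul (hν : ∀ a, 0 ≤ ν a) {g : α → 𝕜}
    (hg : Summable fun a => ν a * ‖g a‖ ^ 2) : Memℓp (fun a => (√(ν a) : 𝕜) * g a) 2 := by
  refine (memℓp_gen_iff (by norm_num)).2 ?_
  convert hg using 2 with a
  rw [ENNReal.toReal_ofNat, Real.rpow_two, norm_mul, mul_pow, RCLike.norm_ofReal,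
    sq_abs, Real.sq_sqrt (hν a)]

theorem inner_sqrt_mul (hν : ∀ a, 0 ≤ ν a) {g h : α → 𝕜}
    (hg : Memℓp (fun a => (√(ν a) : 𝕜) * g a) 2) (hh : Memℓp (fun a => (√(ν a) : 𝕜) * h a) 2) :
    inner 𝕜 (⟨_, hg⟩ : lp (fun _ : α => 𝕜) 2) ⟨_, hh⟩ = ∑' a, (ν a : 𝕜) * (conj (g a) * h a) := by
  rw [lp.inner_eq_tsum]
  refine tsum_congr fun a => ?_
  have hsqrt : (√(ν a) : 𝕜) * √(ν a) = ν a := by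
    rw [← RCLike.ofReal_mul, Real.mul_self_sqrt (hν a)]
  simp only [RCLike.inner_apply', map_mul, RCLike.conj_ofReal]
  linear_combination (conj (g a) * h a) * hsqrt

/-- Bessel's inequality in `L²(ν)` for an atomic measure `ν`, evaluated at a single atom. -/
theorem mul_sum_norm_sq_le_one_of_orthonormal {ι : Type*} [Fintype ι] [DecidableEq ι]
    (hν : ∀ a, 0 ≤ ν a) {g : ι → α → 𝕜} (hg : ∀ j, Summable fun a => ν a * ‖g j a‖ ^ 2)
    (horth : ∀ j k, ∑' a, (ν a : 𝕜) * (conj (g j a) * g k a) = if j = k then 1 else 0)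
    (a : α) : ν a * ∑ j, ‖g j a‖ ^ 2 ≤ 1 := by
  let v : ι → lp (fun _ : α => 𝕜) 2 := fun j => ⟨_, memℓp_sqrt_mul hν (hg j)⟩
  have hv : Orthonormal 𝕜 v := orthonormal_iff_ite.2 fun j k => by
    rw [← horth]; exact inner_sqrt_mul hν _ _
  simpa [v, Finset.mul_sum, mul_pow, Real.sq_sqrt (hν a)] using
    hv.sum_norm_sq_apply_le Finset.univ a

end WeightedBessel

section IsotropicMeasure

variable {𝕜 α ι : Type*} [RCLike 𝕜] [Fintype ι] {ν : α → ℝ} {x : α → EuclideanSpace 𝕜 ι}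

variable (x) in
noncomputable def isotropicFrame : Option ι → α → 𝕜
  | none => fun _ => 1
  | some k => fun b => (√(Fintype.card ι) : 𝕜) * x b k

theorem sum_norm_sq_isotropicFrame (hx : ∀ a, ‖x a‖ = 1) (a : α) :
    ∑ j, ‖isotropicFrame x j a‖ ^ 2 = Fintype.card ι + 1 := by
  simp only [Fintype.sum_option, isotropicFrame, norm_one, one_pow, norm_mul, mul_pow,
    RCLike.norm_ofReal, sq_abs, Real.sq_sqrt (Nat.cast_nonneg _), ← Finset.mul_sum,
    ← EuclideanSpace.norm_sq_eq, hx a]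
  ring

theorem summable_isotropicFrame (hx : ∀ a, ‖x a‖ = 1) (hν : ∀ a, 0 ≤ ν a) (hsum : Summable ν)
    (j : Option ι) : Summable fun b => ν b * ‖isotropicFrame x j b‖ ^ 2 := by
  refine Summable.of_nonneg_of_le (fun b => mul_nonneg (hν b) (sq_nonneg _)) (fun b => ?_)
    (hsum.mul_left ((Fintype.card ι : ℝ) + 1))
  calc ν b * ‖isotropicFrame x j b‖ ^ 2 ≤ ν b * ∑ j, ‖isotropicFrame x j b‖ ^ 2 := by
        gcongr
        · exact hν b
        · exact Finset.single_le_sum (f := fun j => ‖isotropicFrame x j b‖ ^ 2)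
            (fun j _ => sq_nonneg _) (Finset.mem_univ j)
    _ = (Fintype.card ι + 1) * ν b := by rw [sum_norm_sq_isotropicFrame hx, mul_comm]

theorem tsum_conj_isotropicFrame_mul [DecidableEq ι] (htot : ∑' a, ν a = 1)
    (hm1 : ∀ j, ∑' a, (ν a : 𝕜) * x a j = 0)
    (hm2 : ∀ j k, j ≠ k → ∑' a, (ν a : 𝕜) * (x a j * conj (x a k)) = 0)
    (hm3 : ∀ j, ∑' a, ν a * ‖x a j‖ ^ 2 = 1 / Fintype.card ι) (j k : Option ι) :
    ∑' b, (ν b : 𝕜) * (conj (isotropicFrame x j b) * isotropicFrame x k b) =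
      if j = k then 1 else 0 := by
  have hd : (√(Fintype.card ι : ℝ) : 𝕜) * √(Fintype.card ι : ℝ) = (Fintype.card ι : ℝ) := by
    rw [← RCLike.ofReal_mul, Real.mul_self_sqrt (Nat.cast_nonneg _)]
  rcases j with _ | j <;> rcases k with _ | k
  · simp [isotropicFrame, ← RCLike.ofReal_tsum, htot]
  · simp only [isotropicFrame, map_one, one_mul, reduceCtorEq, if_false]
    simp_rw [mul_left_comm _ (√(Fintype.card ι : ℝ) : 𝕜)]
    rw [tsum_mul_left, hm1, mul_zero]
  · have hterm : ∀ b, (ν b : 𝕜) * (conj (isotropicFrame x (some j) b) * isotropicFrame x none b)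
        = √(Fintype.card ι : ℝ) * conj ((ν b : 𝕜) * x b j) := fun b => by
      simp only [isotropicFrame, map_mul, RCLike.conj_ofReal]
      ring
    rw [tsum_congr hterm, tsum_mul_left, ← RCLike.conj_tsum, hm1, map_zero, mul_zero,
      if_neg (Option.some_ne_none j)]
  · have hterm : ∀ b, (ν b : 𝕜) * (conj (isotropicFrame x (some j) b) * isotropicFrame x (some k) b)
        = (Fintype.card ι : ℝ) * ((ν b : 𝕜) * (x b k * conj (x b j))) := fun b => by
      simp only [isotropicFrame, map_mul, RCLike.conj_ofReal]
      linear_combination ((ν b : 𝕜) * (x b k * conj (x b j))) * hd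
    rw [tsum_congr hterm, tsum_mul_left]
    by_cases hjk : j = k
    · subst hjk
      have : Nonempty ι := ⟨j⟩
      have hne : (Fintype.card ι : ℝ) ≠ 0 := Nat.cast_ne_zero.2 Fintype.card_ne_zero
      simp_rw [RCLike.mul_conj, ← RCLike.ofReal_pow, ← RCLike.ofReal_mul, ← RCLike.ofReal_tsum,
        hm3, ← RCLike.ofReal_mul, mul_one_div_cancel hne]
      simp
    · rw [hm2 k j (Ne.symm hjk), mul_zero, if_neg (by simpa using hjk)]

theorem card_add_one_mul_le_one_of_isotropic (hx : ∀ a, ‖x a‖ = 1)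
    (hν : ∀ a, 0 ≤ ν a) (hsum : Summable ν) (htot : ∑' a, ν a = 1)
    (hm1 : ∀ j, ∑' a, (ν a : 𝕜) * x a j = 0)
    (hm2 : ∀ j k, j ≠ k → ∑' a, (ν a : 𝕜) * (x a j * conj (x a k)) = 0)
    (hm3 : ∀ j, ∑' a, ν a * ‖x a j‖ ^ 2 = 1 / Fintype.card ι) (a : α) :
    (Fintype.card ι + 1) * ν a ≤ 1 := by
  classical
  have := mul_sum_norm_sq_le_one_of_orthonormal hν (summable_isotropicFrame hx hν hsum)
    (tsum_conj_isotropicFrame_mul htot hm1 hm2 hm3) a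
  rwa [sum_norm_sq_isotropicFrame hx, mul_comm] at this

end IsotropicMeasure

theorem Real.rpow_one_sub_mul_le_rpow {c t θ : ℝ} (hc : 0 ≤ c) (ht : 0 ≤ t) (hct : c * t ≤ 1)
    (hθ : θ ≤ 1) : c ^ (1 - θ) * t ≤ t ^ θ := by
  calc c ^ (1 - θ) * t = (c * t) ^ (1 - θ) * t ^ θ := by
        rw [Real.mul_rpow hc ht, mul_assoc, ← Real.rpow_add' ht (by norm_num), sub_add_cancel,
          Real.rpow_one]
    _ ≤ 1 * t ^ θ := by
        gcongr
        exact Real.rpow_le_one (mul_nonneg hc ht) hct (by linarith)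
    _ = t ^ θ := one_mul _

theorem ENNReal.ofReal_tsum_le_tsum_ofReal {α : Type*} {f g : α → ℝ} (hf : ∀ a, 0 ≤ f a)
    (hfs : Summable f) (hfg : ∀ a, f a ≤ g a) :
    ENNReal.ofReal (∑' a, f a) ≤ ∑' a, ENNReal.ofReal (g a) := by
  rw [ENNReal.ofReal_tsum_of_nonneg hf hfs]
  exact ENNReal.tsum_le_tsum fun a => ENNReal.ofReal_le_ofReal (hfg a)

theorem stmt_8_general (n : ℕ) (θ : ℝ) (hθ1 : θ < 1)
    (x : ℕ → EuclideanSpace ℂ (Fin (n + 1))) (hx : ∀ i, ‖x i‖ = 1)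
    (ν : ℕ → ℝ) (hν : ∀ i, 0 ≤ ν i) (hsum : Summable ν) (htot : ∑' i, ν i = 1)
    (hm1 : ∀ j : Fin (n + 1), ∑' i, (ν i : ℂ) * x i j = 0)
    (hm2 : ∀ j k : Fin (n + 1), j ≠ k →
      ∑' i, (ν i : ℂ) * (x i j * (starRingEnd ℂ) (x i k)) = 0)
    (hm3 : ∀ j : Fin (n + 1), ∑' i, ν i * ‖x i j‖ ^ 2 = 1 / (n + 1)) :
    ENNReal.ofReal (((n : ℝ) + 2) ^ (1 - θ)) ≤ ∑' i, ENNReal.ofReal (ν i ^ θ) := by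
  have hbessel (i : ℕ) : ((n : ℝ) + 2) * ν i ≤ 1 := by
    have := card_add_one_mul_le_one_of_isotropic hx hν hsum htot hm1 hm2
      (by simpa using hm3) i
    simpa [add_assoc, one_add_one_eq_two] using this
  have hC : 0 ≤ ((n : ℝ) + 2) ^ (1 - θ) := by positivity
  calc ENNReal.ofReal (((n : ℝ) + 2) ^ (1 - θ))
      = ENNReal.ofReal (∑' i, ((n : ℝ) + 2) ^ (1 - θ) * ν i) := by rw [tsum_mul_left, htot, mul_one]
    _ ≤ ∑' i, ENNReal.ofReal (ν i ^ θ) :=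
      ENNReal.ofReal_tsum_le_tsum_ofReal (fun i => mul_nonneg hC (hν i)) (hsum.mul_left _)
        fun i => Real.rpow_one_sub_mul_le_rpow (by positivity) (hν i) (hbessel i) hθ1.le

theorem stmt_8 (n : ℕ) (hn : 1 ≤ n) (θ : ℝ) (hθ0 : 0 < θ) (hθ1 : θ < 1)
    (x : ℕ → EuclideanSpace ℂ (Fin (n + 1))) (hx : ∀ i, ‖x i‖ = 1)
    (ν : ℕ → ℝ) (hν : ∀ i, 0 ≤ ν i) (hsum : Summable ν) (htot : ∑' i, ν i = 1)
    (hm1 : ∀ j : Fin (n + 1), ∑' i, (ν i : ℂ) * x i j = 0)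
    (hm2 : ∀ j k : Fin (n + 1), j ≠ k →
      ∑' i, (ν i : ℂ) * (x i j * (starRingEnd ℂ) (x i k)) = 0)
    (hm3 : ∀ j : Fin (n + 1), ∑' i, ν i * ‖x i j‖ ^ 2 = 1 / (n + 1)) :
    ENNReal.ofReal (((n : ℝ) + 2) ^ (1 - θ)) ≤ ∑' i, ENNReal.ofReal (ν i ^ θ) :=
  stmt_8_general n θ hθ1 x hx ν hν hsum htot hm1 hm2 hm3
end

section
/- Let $n \geq 1$ and $0 < \theta < 1$, and suppose a probability measure $\nu$ on $S^{2n+1} \subset \mathbb{C}^{n+1}$, supported on countably many points with weights $\nu_i$ and satisfying the vanishing moment conditions $\int z_j d\nu = 0$, $\int z_j \bar z_k d\nu = 0$ ($j \neq k$), $\int |z_j|^2 d\nu = \frac{1}{n+1}$, achieves $\sum_i \nu_i^{\theta} = (n+2)^{1-\theta}$. Then $\nu$ is supported on exactly $n+2$ points $x_1, \ldots, x_{n+2}$, each with weight $\nu_i = \frac{1}{n+2}$, and for all $1 \leq i < j \leq n+2$ the pairwise distances satisfy $\|x_i - x_j\| = \sqrt{\frac{2(n+2)}{n+1}}$; i.e.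 the support is the vertex set of a regular $(n+1)$-simplex inscribed in the unit sphere. -/
/-!
Testing the moment conditions against `v = x i` gives, for every atom `x i`,
`∑ⱼ νⱼ |1 + (n+1)⟪x i, x j⟫|² = 1 + (n+1)² ‖x i‖² / (n+1) = n + 2`.
The term `j = i` alone is `νᵢ (n+2)²`, so every weight is at most `1/(n+2)`. On `[0, 1/(n+2)]`
the concave function `t ↦ t^θ` lies above the chord `t ↦ (n+2)^(1-θ) t`, touching it only at the
endpoints, so `∑ νᵢ^θ = (n+2)^(1-θ) = ∑ (n+2)^(1-θ) νᵢ` forces each weight to be `0` or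
`1/(n+2)`: there are exactly `n+2` atoms. For an atom `x i` the diagonal term then exhausts the
identity above, so `1 + (n+1)⟪x i, x j⟫ = 0` for every other atom `x j`, which gives
`‖x i - x j‖² = 2 + 2/(n+1)`.
-/

open scoped ComplexConjugate InnerProductSpace

lemma summable_smul_of_norm_le {α E : Type*} [NormedAddCommGroup E] [NormedSpace ℝ E]
    [CompleteSpace E] {ν : α → ℝ} (hν : ∀ i, 0 ≤ ν i) (hsum : Summable ν) {f : α → E} {C : ℝ}
    (hf : ∀ i, ‖f i‖ ≤ C) : Summable fun i => ν i • f i :=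
  .of_norm_bounded (hsum.mul_right C) fun i => by
    rw [norm_smul, Real.norm_of_nonneg (hν i)]
    exact mul_le_mul_of_nonneg_left (hf i) (hν i)

lemma summable_ofReal_mul_of_norm_le {α : Type*} {ν : α → ℝ} (hν : ∀ i, 0 ≤ ν i)
    (hsum : Summable ν) {f : α → ℂ} {C : ℝ} (hf : ∀ i, ‖f i‖ ≤ C) :
    Summable fun i => (ν i : ℂ) * f i := by
  simpa only [Complex.real_smul] using summable_smul_of_norm_le hν hsum hf

lemma summable_mul_of_norm_le {α : Type*} {ν : α → ℝ} (hν : ∀ i, 0 ≤ ν i)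
    (hsum : Summable ν) {f : α → ℝ} {C : ℝ} (hf : ∀ i, ‖f i‖ ≤ C) :
    Summable fun i => ν i * f i := by
  simpa only [smul_eq_mul] using summable_smul_of_norm_le hν hsum hf

section Moments

variable {ι : Type*} [Fintype ι] {ν : ℕ → ℝ} {x : ℕ → EuclideanSpace ℂ ι}

lemma EuclideanSpace.inner_eq_sum_conj_mul (v w : EuclideanSpace ℂ ι) :
    ⟪v, w⟫_ℂ = ∑ k, conj (v k) * w k := by
  simp [PiLp.inner_apply, mul_comm]

lemma tsum_ofReal_mul_inner_eq_zero (hν : ∀ i, 0 ≤ ν i) (hsum : Summable ν)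
    (hx : ∀ i, ‖x i‖ ≤ 1) (hm1 : ∀ k, ∑' i, (ν i : ℂ) * x i k = 0) (v : EuclideanSpace ℂ ι) :
    ∑' i, (ν i : ℂ) * ⟪v, x i⟫_ℂ = 0 := by
  have hsummable (k : ι) : Summable fun i => (ν i : ℂ) * x i k :=
    summable_ofReal_mul_of_norm_le hν hsum fun i => (PiLp.norm_apply_le _ k).trans (hx i)
  calc ∑' i, (ν i : ℂ) * ⟪v, x i⟫_ℂ = ∑' i, ∑ k, conj (v k) * ((ν i : ℂ) * x i k) := by
        simp only [EuclideanSpace.inner_eq_sum_conj_mul, Finset.mul_sum, mul_left_comm]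
    _ = ∑ k, conj (v k) * ∑' i, (ν i : ℂ) * x i k := by
        rw [Summable.tsum_finsetSum fun k _ => (hsummable k).mul_left _]
        simp only [tsum_mul_left]
    _ = 0 := by simp [hm1]

lemma tsum_mul_normSq_inner {c : ℝ} (hν : ∀ i, 0 ≤ ν i) (hsum : Summable ν)
    (hx : ∀ i, ‖x i‖ ≤ 1)
    (hm2 : ∀ k l, k ≠ l → ∑' i, (ν i : ℂ) * (x i k * conj (x i l)) = 0)
    (hm3 : ∀ k, ∑' i, ν i * ‖x i k‖ ^ 2 = c) (v : EuclideanSpace ℂ ι) :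
    ∑' i, ν i * Complex.normSq ⟪v, x i⟫_ℂ = c * ‖v‖ ^ 2 := by
  have hsummable (k l : ι) : Summable fun i => (ν i : ℂ) * (x i k * conj (x i l)) := by
    refine summable_ofReal_mul_of_norm_le hν hsum (C := 1) fun i => ?_
    rw [norm_mul, Complex.norm_conj]
    exact mul_le_one₀ ((PiLp.norm_apply_le _ k).trans (hx i)) (norm_nonneg _)
      ((PiLp.norm_apply_le _ l).trans (hx i))
  apply Complex.ofReal_injective
  calc ((∑' i, ν i * Complex.normSq ⟪v, x i⟫_ℂ : ℝ) : ℂ)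
      = ∑' i, ∑ k, ∑ l, conj (v k) * v l * ((ν i : ℂ) * (x i k * conj (x i l))) := by
        push_cast
        refine tsum_congr fun i => ?_
        rw [← Complex.mul_conj, EuclideanSpace.inner_eq_sum_conj_mul, map_sum, Finset.sum_mul_sum,
          Finset.mul_sum]
        refine Finset.sum_congr rfl fun k _ => ?_
        rw [Finset.mul_sum]
        refine Finset.sum_congr rfl fun l _ => ?_
        simp only [map_mul, Complex.conj_conj]
        ring
    _ = ∑ k, ∑ l, conj (v k) * v l * ∑' i, (ν i : ℂ) * (x i k * conj (x i l)) := by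
        rw [Summable.tsum_finsetSum fun k _ => summable_sum fun l _ => (hsummable k l).mul_left _]
        refine Finset.sum_congr rfl fun k _ => ?_
        rw [Summable.tsum_finsetSum fun l _ => (hsummable k l).mul_left _]
        simp only [tsum_mul_left]
    _ = ∑ k, conj (v k) * v k * c := by
        refine Finset.sum_congr rfl fun k _ => ?_
        rw [Finset.sum_eq_single k (fun l _ hlk => by rw [hm2 k l hlk.symm, mul_zero])
          (fun hk => absurd (Finset.mem_univ k) hk)]
        simp_rw [Complex.mul_conj, Complex.normSq_eq_norm_sq, ← Complex.ofReal_mul,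
          ← Complex.ofReal_tsum, hm3]
    _ = ((c * ‖v‖ ^ 2 : ℝ) : ℂ) := by
        rw [← Finset.sum_mul, ← EuclideanSpace.inner_eq_sum_conj_mul, inner_self_eq_norm_sq_to_K]
        push_cast
        exact mul_comm _ _

lemma norm_inner_le_of_norm_le_one (hx : ∀ i, ‖x i‖ ≤ 1) (v : EuclideanSpace ℂ ι) (i : ℕ) :
    ‖⟪v, x i⟫_ℂ‖ ≤ ‖v‖ :=
  (norm_inner_le_norm v (x i)).trans (mul_le_of_le_one_right (norm_nonneg v) (hx i))

lemma tsum_mul_normSq_one_add_mul_inner {c : ℝ} (hν : ∀ i, 0 ≤ ν i) (hsum : Summable ν)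
    (htot : ∑' i, ν i = 1) (hx : ∀ i, ‖x i‖ ≤ 1) (hm1 : ∀ k, ∑' i, (ν i : ℂ) * x i k = 0)
    (hm2 : ∀ k l, k ≠ l → ∑' i, (ν i : ℂ) * (x i k * conj (x i l)) = 0)
    (hm3 : ∀ k, ∑' i, ν i * ‖x i k‖ ^ 2 = c) (a : ℝ) (v : EuclideanSpace ℂ ι) :
    ∑' i, ν i * Complex.normSq (1 + a * ⟪v, x i⟫_ℂ) = 1 + a ^ 2 * c * ‖v‖ ^ 2 := by
  have hbound := norm_inner_le_of_norm_le_one hx v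
  have hsum_re : Summable fun i => ν i * (⟪v, x i⟫_ℂ).re :=
    summable_mul_of_norm_le hν hsum fun i => (Complex.abs_re_le_norm _).trans (hbound i)
  have hsum_normSq : Summable fun i => ν i * Complex.normSq ⟪v, x i⟫_ℂ :=
    summable_mul_of_norm_le hν hsum fun i => by
      rw [Complex.normSq_eq_norm_sq, norm_pow, norm_norm]
      exact pow_le_pow_left₀ (norm_nonneg _) (hbound i) 2
  have hmean_re : ∑' i, ν i * (⟪v, x i⟫_ℂ).re = 0 := by
    have h := congrArg Complex.re (tsum_ofReal_mul_inner_eq_zero hν hsum hx hm1 v)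
    rw [Complex.re_tsum (summable_ofReal_mul_of_norm_le hν hsum hbound)] at h
    simpa only [Complex.re_ofReal_mul, Complex.zero_re] using h
  calc ∑' i, ν i * Complex.normSq (1 + a * ⟪v, x i⟫_ℂ)
      = ∑' i, (ν i + 2 * a * (ν i * (⟪v, x i⟫_ℂ).re)
          + a ^ 2 * (ν i * Complex.normSq ⟪v, x i⟫_ℂ)) := by
        refine tsum_congr fun i => ?_
        simp only [Complex.normSq_apply, Complex.add_re, Complex.add_im, Complex.mul_re,
          Complex.mul_im, Complex.one_re, Complex.one_im, Complex.ofReal_re, Complex.ofReal_im]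
        ring
    _ = 1 + a ^ 2 * c * ‖v‖ ^ 2 := by
        rw [(hsum.add (hsum_re.mul_left _)).tsum_add (hsum_normSq.mul_left _),
          hsum.tsum_add (hsum_re.mul_left _), tsum_mul_left, tsum_mul_left, htot, hmean_re,
          tsum_mul_normSq_inner hν hsum hx hm2 hm3]
        ring

end Moments

lemma summable_of_tsum_ne_zero {α : Type*} {f : α → ℝ} (h : ∑' i, f i ≠ 0) : Summable f :=
  not_not.mp fun hf => h (tsum_eq_zero_of_not_summable hf)

section Concentration

variable {α : Type*} {ν f : α → ℝ} {N : ℝ} {i : α}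

lemma le_inv_of_tsum_mul_eq (hN : 0 < N) (hnn : ∀ j, 0 ≤ ν j * f j)
    (htsum : ∑' j, ν j * f j = N) (hfi : f i = N ^ 2) : ν i ≤ N⁻¹ := by
  have hsummable : Summable fun j => ν j * f j := summable_of_tsum_ne_zero (htsum ▸ hN.ne')
  have h := hsummable.le_tsum i fun j _ => hnn j
  rw [htsum, hfi] at h
  rw [← one_div, le_div_iff₀ hN]
  nlinarith

lemma mul_eq_zero_of_tsum_mul_eq (hN : 0 < N) (hnn : ∀ j, 0 ≤ ν j * f j)
    (htsum : ∑' j, ν j * f j = N) (hfi : f i = N ^ 2) (hνi : ν i = N⁻¹) {j : α} (hji : j ≠ i) :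
    ν j * f j = 0 := by
  classical
  have hsummable : Summable fun j => ν j * f j := summable_of_tsum_ne_zero (htsum ▸ hN.ne')
  have hpair := hsummable.sum_le_tsum {j, i} fun k _ => hnn k
  rw [Finset.sum_pair hji, htsum, hfi, hνi, sq, inv_mul_cancel_left₀ hN.ne'] at hpair
  linarith [hnn j]

end Concentration

namespace Real

variable {t N θ : ℝ}

lemma rpow_one_sub_eq_inv_rpow_sub_one (hN : 0 < N) : N ^ (1 - θ) = N⁻¹ ^ (θ - 1) := by
  rw [inv_rpow hN.le, ← rpow_neg hN.le, neg_sub]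

lemma mul_rpow_one_sub_le_rpow (hN : 0 < N) (ht : 0 ≤ t) (htN : t ≤ N⁻¹) (hθ : θ ≤ 1) :
    t * N ^ (1 - θ) ≤ t ^ θ := by
  rcases ht.eq_or_lt with rfl | ht
  · simpa using rpow_nonneg le_rfl θ
  calc t * N ^ (1 - θ) = t * N⁻¹ ^ (θ - 1) := by rw [rpow_one_sub_eq_inv_rpow_sub_one hN]
    _ ≤ t * t ^ (θ - 1) :=
        mul_le_mul_of_nonneg_left (rpow_le_rpow_of_nonpos ht htN (by linarith)) ht.le
    _ = t ^ θ := by rw [rpow_sub_one ht.ne', mul_div_cancel₀ _ ht.ne']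

lemma eq_zero_or_eq_inv_of_mul_rpow_one_sub_eq (hN : 0 < N) (ht : 0 ≤ t) (hθ : θ ≠ 1)
    (h : t * N ^ (1 - θ) = t ^ θ) : t = 0 ∨ t = N⁻¹ := by
  rcases ht.eq_or_lt with rfl | ht
  · exact .inl rfl
  refine .inr ((rpow_left_inj ht.le (inv_nonneg.mpr hN.le) (sub_ne_zero.mpr hθ)).mp ?_)
  rw [rpow_sub_one ht.ne', ← h, rpow_one_sub_eq_inv_rpow_sub_one hN, mul_div_cancel_left₀ _ ht.ne']

end Real

lemma eq_zero_or_eq_inv_of_tsum_rpow_eq {α : Type*} {ν : α → ℝ} {N θ : ℝ} (hN : 0 < N)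
    (hθ : θ < 1) (hν : ∀ i, 0 ≤ ν i) (hle : ∀ i, ν i ≤ N⁻¹) (hsum : Summable ν)
    (htot : ∑' i, ν i = 1) (hsumθ : Summable fun i => ν i ^ θ)
    (heq : ∑' i, ν i ^ θ = N ^ (1 - θ)) (i : α) : ν i = 0 ∨ ν i = N⁻¹ := by
  by_contra hi
  have hlt : ν i * N ^ (1 - θ) < ν i ^ θ :=
    (Real.mul_rpow_one_sub_le_rpow hN (hν i) (hle i) hθ.le).lt_of_ne fun h =>
      hi (Real.eq_zero_or_eq_inv_of_mul_rpow_one_sub_eq hN (hν i) hθ.ne h)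
  have := (hsum.mul_right _).tsum_lt_tsum
    (fun j => Real.mul_rpow_one_sub_le_rpow hN (hν j) (hle j) hθ.le) hlt hsumθ
  rw [tsum_mul_right, htot, one_mul, heq] at this
  exact this.false

lemma exists_finset_of_eq_zero_or_eq {α : Type*} {ν : α → ℝ} {c : ℝ} (hc : 0 < c)
    (hsum : Summable ν) (htot : ∑' i, ν i = 1) (hval : ∀ i, ν i = 0 ∨ ν i = c) :
    ∃ S : Finset α, S.card * c = 1 ∧ (∀ i ∉ S, ν i = 0) ∧ ∀ i ∈ S, ν i = c := by
  have hfin : (Function.support ν).Finite := by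
    have hsmall := hsum.tendsto_cofinite_zero.eventually_lt_const hc
    refine (Filter.eventually_cofinite.mp hsmall).subset fun i hi => ?_
    show ¬ν i < c
    rw [(hval i).resolve_left hi]
    exact lt_irrefl c
  have hout (i) (hi : i ∉ hfin.toFinset) : ν i = 0 := by simpa using hi
  have hin (i) (hi : i ∈ hfin.toFinset) : ν i = c := (hval i).resolve_left (by simpa using hi)
  refine ⟨hfin.toFinset, ?_, hout, hin⟩
  rw [← htot, tsum_eq_sum hout, Finset.sum_congr rfl hin, Finset.sum_const, nsmul_eq_mul]

lemma Complex.re_eq_neg_inv_of_one_add_ofReal_mul_eq_zero {a : ℝ} {z : ℂ}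
    (h : 1 + (a : ℂ) * z = 0) : z.re = -a⁻¹ := by
  have hre : 1 + a * z.re = 0 := by simpa using congrArg Complex.re h
  have ha : a ≠ 0 := by
    rintro rfl
    simp at hre
  field_simp
  linarith

lemma normSq_one_add_mul_inner_self {E : Type*} [NormedAddCommGroup E] [InnerProductSpace ℂ E]
    {u : E} (hu : ‖u‖ = 1) (a : ℝ) : Complex.normSq (1 + a * ⟪u, u⟫_ℂ) = (1 + a) ^ 2 := by
  have h : 1 + (a : ℂ) * ⟪u, u⟫_ℂ = ((1 + a : ℝ) : ℂ) := by
    rw [inner_self_eq_norm_sq_to_K, hu]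
    push_cast
    ring
  rw [h, Complex.normSq_ofReal, sq]

lemma norm_sub_eq_sqrt_of_re_inner_eq {𝕜 E : Type*} [RCLike 𝕜] [NormedAddCommGroup E]
    [InnerProductSpace 𝕜 E] {u v : E} (hu : ‖u‖ = 1) (hv : ‖v‖ = 1) {r : ℝ}
    (h : RCLike.re (inner 𝕜 u v) = r) : ‖u - v‖ = √(2 - 2 * r) := by
  rw [← Real.sqrt_sq (norm_nonneg (u - v)), @norm_sub_sq 𝕜, hu, hv, h]
  ring_nf

theorem stmt_9_general (n : ℕ) (θ : ℝ) (hθ1 : θ < 1)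
    (x : ℕ → EuclideanSpace ℂ (Fin (n + 1))) (hx : ∀ i, ‖x i‖ = 1)
    (ν : ℕ → ℝ) (hν : ∀ i, 0 ≤ ν i) (hsum : Summable ν) (htot : ∑' i, ν i = 1)
    (hm1 : ∀ j : Fin (n + 1), ∑' i, (ν i : ℂ) * x i j = 0)
    (hm2 : ∀ j k : Fin (n + 1), j ≠ k →
      ∑' i, (ν i : ℂ) * (x i j * (starRingEnd ℂ) (x i k)) = 0)
    (hm3 : ∀ j : Fin (n + 1), ∑' i, ν i * ‖x i j‖ ^ 2 = 1 / (n + 1))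
    (hsumθ : Summable (fun i => ν i ^ θ))
    (heq : ∑' i, ν i ^ θ = ((n : ℝ) + 2) ^ (1 - θ)) :
    ∃ S : Finset ℕ, S.card = n + 2 ∧ (∀ i ∉ S, ν i = 0) ∧
      (∀ i ∈ S, ν i = 1 / (n + 2)) ∧
      ∀ i ∈ S, ∀ j ∈ S, i ≠ j →
        ‖x i - x j‖ = Real.sqrt (2 * (n + 2) / (n + 1)) := by
  set K : ℕ → ℕ → ℝ := fun i j => Complex.normSq (1 + ((n + 1 : ℝ) : ℂ) * ⟪x i, x j⟫_ℂ)
  have hN : (0 : ℝ) < n + 2 := by positivity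
  have hK (i : ℕ) : ∑' j, ν j * K i j = n + 2 := by
    rw [tsum_mul_normSq_one_add_mul_inner hν hsum htot (fun i => (hx i).le) hm1 hm2 hm3, hx i]
    field_simp
    ring
  have hKdiag (i : ℕ) : K i i = (n + 2) ^ 2 := by
    simp only [K, normSq_one_add_mul_inner_self (hx i)]
    ring
  have hKnonneg (i j : ℕ) : 0 ≤ ν j * K i j := mul_nonneg (hν j) (Complex.normSq_nonneg _)
  obtain ⟨S, hcard, hout, hin⟩ := exists_finset_of_eq_zero_or_eq (inv_pos.mpr hN) hsum htot
    (eq_zero_or_eq_inv_of_tsum_rpow_eq hN hθ1 hν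
      (fun i => le_inv_of_tsum_mul_eq hN (hKnonneg i) (hK i) (hKdiag i)) hsum htot hsumθ heq)
  refine ⟨S, ?_, hout, fun i hi => by rw [hin i hi, one_div], fun i hi j hj hij => ?_⟩
  · rw [mul_inv_eq_one₀ hN.ne'] at hcard
    exact_mod_cast hcard
  have hzero : (1 : ℂ) + ((n + 1 : ℝ) : ℂ) * ⟪x i, x j⟫_ℂ = 0 :=
    Complex.normSq_eq_zero.mp <| (mul_eq_zero.mp <| mul_eq_zero_of_tsum_mul_eq hN (hKnonneg i)
      (hK i) (hKdiag i) (hin i hi) hij.symm).resolve_left (by rw [hin j hj]; positivity)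
  have hre : RCLike.re ⟪x i, x j⟫_ℂ = -(n + 1 : ℝ)⁻¹ :=
    Complex.re_eq_neg_inv_of_one_add_ofReal_mul_eq_zero hzero
  rw [norm_sub_eq_sqrt_of_re_inner_eq (hx i) (hx j) hre]
  congr 1
  field_simp
  ring

theorem stmt_9 (n : ℕ) (hn : 1 ≤ n) (θ : ℝ) (hθ0 : 0 < θ) (hθ1 : θ < 1)
    (x : ℕ → EuclideanSpace ℂ (Fin (n + 1))) (hx : ∀ i, ‖x i‖ = 1)
    (hinj : Function.Injective x)
    (ν : ℕ → ℝ) (hν : ∀ i, 0 ≤ ν i) (hsum : Summable ν) (htot : ∑' i, ν i = 1)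
    (hm1 : ∀ j : Fin (n + 1), ∑' i, (ν i : ℂ) * x i j = 0)
    (hm2 : ∀ j k : Fin (n + 1), j ≠ k →
      ∑' i, (ν i : ℂ) * (x i j * (starRingEnd ℂ) (x i k)) = 0)
    (hm3 : ∀ j : Fin (n + 1), ∑' i, ν i * ‖x i j‖ ^ 2 = 1 / (n + 1))
    (hsumθ : Summable (fun i => ν i ^ θ))
    (heq : ∑' i, ν i ^ θ = ((n : ℝ) + 2) ^ (1 - θ)) :
    ∃ S : Finset ℕ, S.card = n + 2 ∧ (∀ i ∉ S, ν i = 0) ∧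
      (∀ i ∈ S, ν i = 1 / (n + 2)) ∧
      ∀ i ∈ S, ∀ j ∈ S, i ≠ j →
        ‖x i - x j‖ = Real.sqrt (2 * (n + 2) / (n + 1)) :=
  stmt_9_general n θ hθ1 x hx ν hν hsum htot hm1 hm2 hm3 hsumθ heq
end

section
/- Let $0 < \theta < 1$ and $n \geq 1$. Let $\nu$ be a probability measure on the unit sphere $S^{n-1} \subset \mathbb{R}^n$ supported on countably many points with weights $\nu_i > 0$, satisfying the balancing condition $\int_{S^{n-1}} \xi_j \, d\nu = 0$ for each coordinate function $\xi_j$, $1 \leq j \leq n$. Then $\sum_i \nu_i^{\theta} \geq 2^{1-\theta}$, with equality if and only if $\nu = \frac{1}{2}(\delta_x + \delta_{-x})$ for some $x \in S^{n-1}$. -/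
theorem stmt_10 (θ : ℝ) (hθ0 : 0 < θ) (hθ1 : θ < 1) (n : ℕ) (hn : 1 ≤ n)
    (x : ℕ → EuclideanSpace ℝ (Fin n)) (hx : ∀ i, ‖x i‖ = 1)
    (hinj : Function.Injective x)
    (ν : ℕ → ℝ) (hν : ∀ i, 0 ≤ ν i) (hsum : Summable ν) (htot : ∑' i, ν i = 1)
    -- balancing condition: ∫ ξ_j dν = 0 for each coordinate function
    (hbal : ∀ j : Fin n, ∑' i, ν i * x i j = 0) :
    ENNReal.ofReal ((2 : ℝ) ^ (1 - θ)) ≤ ∑' i, ENNReal.ofReal (ν i ^ θ) ∧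
    ((∑' i, ENNReal.ofReal (ν i ^ θ)) = ENNReal.ofReal ((2 : ℝ) ^ (1 - θ)) ↔
      ∃ i j : ℕ, i ≠ j ∧ ν i = 1 / 2 ∧ ν j = 1 / 2 ∧ x j = -x i ∧
        ∀ k, k ≠ i → k ≠ j → ν k = 0) := by
  classical
  have h2pos : (0:ℝ) < (2:ℝ) ^ (1 - θ) := Real.rpow_pos_of_pos two_pos _
  -- summability of vector sum
  have hnorm : ∀ k, ‖ν k • x k‖ = ν k := by
    intro k
    rw [norm_smul, hx, mul_one, Real.norm_eq_abs, abs_of_nonneg (hν k)]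
  have hsummf : Summable (fun k => ν k • x k) := by
    apply Summable.of_norm
    simpa only [hnorm] using hsum
  have hvec : ∑' k, ν k • x k = 0 := by
    ext j
    have hproj := (EuclideanSpace.proj j (𝕜 := ℝ)).map_tsum hsummf
    simpa [hbal j] using hproj
  -- each mass is at most 1/2
  have hhalf : ∀ k, ν k ≤ 1 / 2 := by
    intro k
    have h1 := Summable.tsum_eq_add_tsum_ite hsummf k
    rw [hvec] at h1
    have h2 : ν k • x k = -∑' i, ite (i = k) 0 (ν i • x i) :=
      eq_neg_of_add_eq_zero_left h1.symm
    have hsumite : Summable (fun i => ite (i = k) 0 (ν i • x i)) :=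
      hsummf.summable_of_eq_zero_or_self (fun i => by by_cases h : i = k <;> simp [h])
    have hsumite' : Summable (fun i => ite (i = k) 0 (ν i)) :=
      hsum.summable_of_eq_zero_or_self (fun i => by by_cases h : i = k <;> simp [h])
    have h3 : ν k ≤ ∑' i, ite (i = k) 0 (ν i) := by
      calc ν k = ‖ν k • x k‖ := (hnorm k).symm
        _ = ‖∑' i, ite (i = k) 0 (ν i • x i)‖ := by rw [h2, norm_neg]
        _ ≤ ∑' i, ‖ite (i = k) 0 (ν i • x i)‖ := norm_tsum_le_tsum_norm (by
            apply hsumite'.congr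
            intro i
            by_cases h : i = k <;> simp [h, hnorm])
        _ = ∑' i, ite (i = k) 0 (ν i) := by
            apply tsum_congr
            intro i
            by_cases h : i = k <;> simp [h, hnorm]
    have h4 := Summable.tsum_eq_add_tsum_ite hsum k
    rw [htot] at h4
    linarith
  have hb : (2:ℝ) ^ (1 - θ) = (1/2 : ℝ) ^ (θ - 1) := by
    rw [show (1/2 : ℝ) = 2⁻¹ by norm_num, Real.inv_rpow (by norm_num : (0:ℝ) ≤ 2),
      ← Real.rpow_neg (by norm_num : (0:ℝ) ≤ 2)]
    congr 1
    ring
  -- pointwise bound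
  have key : ∀ k, ENNReal.ofReal ((2:ℝ) ^ (1 - θ) * ν k) ≤ ENNReal.ofReal (ν k ^ θ) := by
    intro k
    apply ENNReal.ofReal_le_ofReal
    rcases eq_or_lt_of_le (hν k) with h | h
    · simp [← h, Real.zero_rpow hθ0.ne']
    · have hle : (1/2 : ℝ) ^ (θ - 1) ≤ ν k ^ (θ - 1) :=
        Real.rpow_le_rpow_of_nonpos h (hhalf k) (by linarith)
      calc (2:ℝ) ^ (1 - θ) * ν k ≤ ν k ^ (θ - 1) * ν k := by
            rw [hb]; exact mul_le_mul_of_nonneg_right hle (hν k)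
        _ = ν k ^ (θ - 1) * ν k ^ (1:ℝ) := by rw [Real.rpow_one]
        _ = ν k ^ (θ - 1 + 1) := (Real.rpow_add h _ _).symm
        _ = ν k ^ θ := by norm_num
  -- the lower sum
  have hlsum : ∑' k, ENNReal.ofReal ((2:ℝ) ^ (1 - θ) * ν k)
      = ENNReal.ofReal ((2:ℝ) ^ (1 - θ)) := by
    calc ∑' k, ENNReal.ofReal ((2:ℝ) ^ (1 - θ) * ν k)
        = ∑' k, ENNReal.ofReal ((2:ℝ) ^ (1 - θ)) * ENNReal.ofReal (ν k) := by
          apply tsum_congr; intro k; rw [ENNReal.ofReal_mul h2pos.le]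
      _ = ENNReal.ofReal ((2:ℝ) ^ (1 - θ)) * ∑' k, ENNReal.ofReal (ν k) :=
          ENNReal.tsum_mul_left
      _ = ENNReal.ofReal ((2:ℝ) ^ (1 - θ)) := by
          rw [← ENNReal.ofReal_tsum_of_nonneg hν hsum, htot]
          simp
  have hmain : ENNReal.ofReal ((2:ℝ) ^ (1 - θ)) ≤ ∑' i, ENNReal.ofReal (ν i ^ θ) := by
    rw [← hlsum]; exact ENNReal.tsum_le_tsum key
  refine ⟨hmain, ?_, ?_⟩
  · -- equality → structure
    intro heq
    -- termwise equality
    have hterm : ∀ k, ENNReal.ofReal ((2:ℝ) ^ (1 - θ) * ν k) = ENNReal.ofReal (ν k ^ θ) := by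
      intro k
      by_contra hne
      have hlt : ENNReal.ofReal ((2:ℝ) ^ (1 - θ) * ν k) < ENNReal.ofReal (ν k ^ θ) :=
        lt_of_le_of_ne (key k) hne
      have := ENNReal.tsum_lt_tsum (i := k)
        (by rw [hlsum]; exact ENNReal.ofReal_ne_top) key hlt
      rw [hlsum, heq] at this
      exact lt_irrefl _ this
    have hreal : ∀ k, (2:ℝ) ^ (1 - θ) * ν k = ν k ^ θ := by
      intro k
      have := hterm k
      rw [ENNReal.ofReal_eq_ofReal_iff (mul_nonneg h2pos.le (hν k))
        (Real.rpow_nonneg (hν k) θ)] at this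
      exact this
    -- any positive mass equals 1/2
    have hmass : ∀ k, 0 < ν k → ν k = 1 / 2 := by
      intro k hk
      have h1 : ν k ^ (θ - 1) = (1/2 : ℝ) ^ (θ - 1) := by
        have h2 : ν k ^ (θ - 1) * ν k = ν k ^ θ := by
          calc ν k ^ (θ - 1) * ν k = ν k ^ (θ - 1) * ν k ^ (1:ℝ) := by rw [Real.rpow_one]
            _ = ν k ^ (θ - 1 + 1) := (Real.rpow_add hk _ _).symm
            _ = ν k ^ θ := by norm_num
        have h4 : ν k ^ (θ - 1) * ν k = (1/2 : ℝ) ^ (θ - 1) * ν k := by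
          rw [h2, ← hreal k, hb]
        exact mul_right_cancel₀ hk.ne' h4
      have h5 : (ν k ^ (θ - 1)) ^ (θ - 1)⁻¹ = ((1/2 : ℝ) ^ (θ - 1)) ^ (θ - 1)⁻¹ := by
        rw [h1]
      rwa [Real.rpow_rpow_inv hk.le (by linarith),
        Real.rpow_rpow_inv (by norm_num) (by linarith)] at h5
    -- there exists positive mass
    have hex : ∃ i, 0 < ν i := by
      by_contra h'
      push_neg at h'
      have : ∀ i, ν i = 0 := fun i => le_antisymm (h' i) (hν i)
      rw [tsum_congr this, tsum_zero] at htot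
      norm_num at htot
    obtain ⟨i, hi⟩ := hex
    have hνi : ν i = 1 / 2 := hmass i hi
    -- second point
    have hrest := Summable.tsum_eq_add_tsum_ite hsum i
    rw [htot, hνi] at hrest
    have hrest' : ∑' k, ite (k = i) 0 (ν k) = 1 / 2 := by linarith
    have hexj : ∃ j, j ≠ i ∧ 0 < ν j := by
      by_contra h'
      push_neg at h'
      have : ∀ k, ite (k = i) 0 (ν k) = 0 := by
        intro k
        by_cases hk : k = i
        · simp [hk]
        · simp [hk, le_antisymm (h' k hk) (hν k)]
      rw [tsum_congr this, tsum_zero] at hrest'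
      norm_num at hrest'
    obtain ⟨j, hji, hj⟩ := hexj
    have hνj : ν j = 1 / 2 := hmass j hj
    -- rest is zero
    have hzero : ∀ k, k ≠ i → k ≠ j → ν k = 0 := by
      intro k hki hkj
      by_contra hk
      have hk' : 0 < ν k := lt_of_le_of_ne (hν k) (Ne.symm hk)
      have hνk : ν k = 1 / 2 := hmass k hk'
      have hfin : ({i, j, k} : Finset ℕ).sum ν ≤ 1 := by
        rw [← htot]
        exact Summable.sum_le_tsum _ (fun m _ => hν m) hsum
      have : ({i, j, k} : Finset ℕ).sum ν = 3 / 2 := by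
        rw [Finset.sum_insert (by simp [Ne.symm hji, Ne.symm hki]),
          Finset.sum_insert (by simp [Ne.symm hkj]), Finset.sum_singleton,
          hνi, hνj, hνk]
        norm_num
      linarith
    -- antipodal
    have hx' : x j = -x i := by
      have hsupp : ∀ k ∉ ({i, j} : Finset ℕ), ν k • x k = 0 := by
        intro k hk
        simp only [Finset.mem_insert, Finset.mem_singleton, not_or] at hk
        rw [hzero k hk.1 hk.2, zero_smul]
      have hts : ∑' k, ν k • x k = ∑ k ∈ ({i, j} : Finset ℕ), ν k • x k :=
        tsum_eq_sum hsupp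
      rw [hvec, Finset.sum_insert (by simpa using Ne.symm hji),
        Finset.sum_singleton, hνi, hνj] at hts
      have h6 : (1/2 : ℝ) • x i + (1/2 : ℝ) • x j = 0 := hts.symm
      have h7 : x i + x j = 0 := by
        have := congrArg (fun v => (2:ℝ) • v) h6
        simpa [smul_add, smul_smul] using this
      rw [eq_neg_iff_add_eq_zero, add_comm]
      exact h7
    exact ⟨i, j, Ne.symm hji, hνi, hνj, hx', hzero⟩
  · -- structure → equality
    rintro ⟨i, j, hij, hνi, hνj, -, hzero⟩
    have hsupp : ∀ k ∉ ({i, j} : Finset ℕ), ENNReal.ofReal (ν k ^ θ) = 0 := by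
      intro k hk
      simp only [Finset.mem_insert, Finset.mem_singleton, not_or] at hk
      rw [hzero k hk.1 hk.2, Real.zero_rpow hθ0.ne']
      simp
    rw [tsum_eq_sum hsupp, Finset.sum_insert (by simpa using hij),
      Finset.sum_singleton, hνi, hνj,
      ← ENNReal.ofReal_add (Real.rpow_nonneg (by norm_num) θ)
        (Real.rpow_nonneg (by norm_num) θ)]
    congr 1
    have h9 : ((1:ℝ)/2) ^ θ = (2:ℝ) ^ (-θ) := by
      rw [show (1/2 : ℝ) = 2⁻¹ by norm_num, Real.inv_rpow (by norm_num : (0:ℝ) ≤ 2),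
        ← Real.rpow_neg (by norm_num : (0:ℝ) ≤ 2)]
    rw [h9, ← two_mul, show (1 - θ) = 1 + -θ by ring, Real.rpow_add two_pos,
      Real.rpow_one]
end

section
/- (Brezis–Lieb lemma.) Let $(X, \mu)$ be a measure space, $0 < p < \infty$, and let $(f_i)$ be a sequence of complex-valued measurable functions, uniformly bounded in $L^p(X,\mu)$, converging $\mu$-almost everywhere to $f$. Then $f \in L^p$ and $\lim_{i \to \infty}\left( \|f_i\|_p^p - \|f_i - f\|_p^p \right) = \|f\|_p^p$. -/
open MeasureTheory Filter Topology

/-! For every `ε > 0` there is `C_ε` with `|‖a + b‖ ^ p - ‖a‖ ^ p| ≤ ε ‖a‖ ^ p + C_ε ‖b‖ ^ p`.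
Taking `a = f i - g`, `b = g`, the part of `|‖f i‖ ^ p - ‖f i - g‖ ^ p - ‖g‖ ^ p|` exceeding
`ε ‖f i - g‖ ^ p` is dominated by `(C_ε + 1) ‖g‖ ^ p` and tends to zero a.e., so its integral
tends to zero by dominated convergence, while `ε ‖f i - g‖ ^ p` has integral `O(ε)` since
`f i - g` is bounded in `Lᵖ`. That `g ∈ Lᵖ` is Fatou's lemma. -/

namespace Real

theorem exists_add_rpow_le {p ε : ℝ} (hp : 0 < p) (hε : 0 < ε) :
    ∃ C, ∀ s w : ℝ, 0 ≤ s → 0 ≤ w → (s + w) ^ p ≤ (1 + ε) * s ^ p + C * w ^ p := by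
  have hnear : ∀ᶠ d in 𝓝[>] (0 : ℝ), (1 + d) ^ p < 1 + ε := by
    have hc : ContinuousAt (fun d : ℝ => (1 + d) ^ p) 0 :=
      (continuousAt_rpow_const _ _ (Or.inr hp.le)).comp (continuousAt_const.add continuousAt_id)
    exact nhdsWithin_le_nhds (hc.eventually_lt continuousAt_const (by simpa using hε))
  obtain ⟨d, hdε, hd : 0 < d⟩ := (hnear.and self_mem_nhdsWithin).exists
  refine ⟨(1 + d⁻¹) ^ p, fun s w hs hw => ?_⟩
  rcases le_total w (d * s) with hwd | hwd
  · calc (s + w) ^ p ≤ ((1 + d) * s) ^ p := by gcongr; linarith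
      _ = (1 + d) ^ p * s ^ p := mul_rpow (by positivity) hs
      _ ≤ (1 + ε) * s ^ p := by gcongr
      _ ≤ _ := le_add_of_nonneg_right (by positivity)
  · have hsw : s ≤ d⁻¹ * w := by rwa [inv_mul_eq_div, le_div_iff₀' hd]
    calc (s + w) ^ p ≤ ((1 + d⁻¹) * w) ^ p := by gcongr; linarith
      _ = (1 + d⁻¹) ^ p * w ^ p := mul_rpow (by positivity) hw
      _ ≤ _ := le_add_of_nonneg_left (by positivity)

end Real

section NormRpow

variable {E : Type*} [SeminormedAddCommGroup E] {p ε : ℝ}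

theorem exists_norm_add_rpow_le (hp : 0 < p) (hε : 0 < ε) :
    ∃ C, ∀ a b : E, ‖a + b‖ ^ p ≤ (1 + ε) * ‖a‖ ^ p + C * ‖b‖ ^ p := by
  obtain ⟨C, hC⟩ := Real.exists_add_rpow_le hp hε
  exact ⟨C, fun a b => (Real.rpow_le_rpow (norm_nonneg _) (norm_add_le a b) hp.le).trans
    (hC _ _ (norm_nonneg a) (norm_nonneg b))⟩

theorem exists_abs_norm_add_rpow_sub_le (hp : 0 < p) (hε : 0 < ε) :
    ∃ C, ∀ a b : E, |‖a + b‖ ^ p - ‖a‖ ^ p| ≤ ε * ‖a‖ ^ p + C * ‖b‖ ^ p := by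
  obtain ⟨C, hC⟩ := Real.exists_add_rpow_le hp hε
  refine ⟨C, fun a b => abs_sub_le_iff.2 ⟨?_, ?_⟩⟩
  · have := (Real.rpow_le_rpow (norm_nonneg _) (norm_add_le a b) hp.le).trans
      (hC _ _ (norm_nonneg a) (norm_nonneg b))
    linarith
  · -- `s` is below both `‖a‖` and `‖a + b‖`, yet still `‖a‖ ≤ s + ‖b‖`.
    set s := min ‖a‖ ‖a + b‖
    have hs0 : 0 ≤ s := le_min (norm_nonneg _) (norm_nonneg _)
    have has : ‖a‖ ≤ s + ‖b‖ :=
      sub_le_iff_le_add.1 <| le_min (by linarith [norm_nonneg b])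
        (by simpa using norm_sub_le (a + b) b)
    have h₁ := (Real.rpow_le_rpow (norm_nonneg _) has hp.le).trans (hC s ‖b‖ hs0 (norm_nonneg b))
    have h₂ : s ^ p ≤ ‖a‖ ^ p := Real.rpow_le_rpow hs0 (min_le_left _ _) hp.le
    have h₃ : s ^ p ≤ ‖a + b‖ ^ p := Real.rpow_le_rpow hs0 (min_le_right _ _) hp.le
    linarith [mul_le_mul_of_nonneg_left h₂ hε.le]

end NormRpow

section Integrals

variable {X : Type*} [MeasurableSpace X] {μ : Measure X}

theorem MeasureTheory.AEStronglyMeasurable.norm_rpow {E : Type*} [SeminormedAddCommGroup E]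
    {u : X → E} (hu : AEStronglyMeasurable u μ) (p : ℝ) :
    AEStronglyMeasurable (fun x => ‖u x‖ ^ p) μ :=
  (hu.norm.aemeasurable.pow_const p).aestronglyMeasurable

theorem lintegral_le_of_tendsto_ae_of_forall_le {F : ℕ → X → ENNReal} {G : X → ENNReal}
    {C : ENNReal} (hF : ∀ i, AEMeasurable (F i) μ)
    (hlim : ∀ᵐ x ∂μ, Tendsto (fun i => F i x) atTop (𝓝 (G x)))
    (hC : ∀ i, ∫⁻ x, F i x ∂μ ≤ C) : ∫⁻ x, G x ∂μ ≤ C :=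
  calc ∫⁻ x, G x ∂μ = ∫⁻ x, liminf (fun i => F i x) atTop ∂μ :=
        lintegral_congr_ae <| hlim.mono fun _ hx => hx.liminf_eq.symm
    _ ≤ liminf (fun i => ∫⁻ x, F i x ∂μ) atTop := lintegral_liminf_le' hF
    _ ≤ C := liminf_le_of_frequently_le' (Frequently.of_forall hC)

theorem tendsto_integral_abs_of_abs_le_mul_add {h u : ℕ → X → ℝ} {M : ℝ}
    (hh : ∀ i, AEStronglyMeasurable (h i) μ)
    (hlim : ∀ᵐ x ∂μ, Tendsto (fun i => h i x) atTop (𝓝 0))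
    (hu : ∀ i, Integrable (u i) μ) (hu_nonneg : ∀ i x, 0 ≤ u i x)
    (hM : ∀ i, ∫ x, u i x ∂μ ≤ M)
    (hdom : ∀ ε > 0, ∃ G : X → ℝ, Integrable G μ ∧ ∀ i x, |h i x| ≤ ε * u i x + G x) :
    Tendsto (fun i => ∫ x, |h i x| ∂μ) atTop (𝓝 0) := by
  refine tendsto_order.2 ⟨fun a ha => .of_forall fun i => ha.trans_le (integral_nonneg
    fun x => abs_nonneg _), fun δ hδ => ?_⟩
  obtain ⟨ε, hε, hεM⟩ := exists_pos_mul_lt (half_pos hδ) M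
  obtain ⟨G, hG, hhG⟩ := hdom ε hε
  set W : ℕ → X → ℝ := fun i x => max (|h i x| - ε * u i x) 0
  have hW_le : ∀ i x, ‖W i x‖ ≤ |G x| := fun i x => by
    rw [Real.norm_of_nonneg (le_max_right _ _)]
    exact max_le (by linarith [hhG i x, le_abs_self (G x)]) (abs_nonneg _)
  have hW_meas : ∀ i, AEStronglyMeasurable (W i) μ := fun i =>
    ((hh i).norm.sub ((hu i).1.const_mul ε)).sup aestronglyMeasurable_const
  have hW_int : ∀ i, Integrable (W i) μ := fun i =>
    hG.abs.mono' (hW_meas i) (.of_forall (hW_le i))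
  have hW_lim : ∀ᵐ x ∂μ, Tendsto (fun i => W i x) atTop (𝓝 0) := hlim.mono fun x hx =>
    squeeze_zero (fun i => le_max_right _ _)
      (fun i => max_le (by linarith [mul_nonneg hε.le (hu_nonneg i x)]) (abs_nonneg _))
      (by simpa using hx.abs)
  have hW : Tendsto (fun i => ∫ x, W i x ∂μ) atTop (𝓝 0) := by
    simpa using tendsto_integral_of_dominated_convergence _ hW_meas hG.abs
      (fun i => .of_forall (hW_le i)) hW_lim
  filter_upwards [hW.eventually (gt_mem_nhds (half_pos hδ))] with i hi
  calc ∫ x, |h i x| ∂μ ≤ ∫ x, (W i x + ε * u i x) ∂μ :=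
        integral_mono_of_nonneg (.of_forall fun x => abs_nonneg _)
          ((hW_int i).add ((hu i).const_mul ε)) (.of_forall fun x => by
            linarith [le_max_left (|h i x| - ε * u i x) 0])
    _ = ∫ x, W i x ∂μ + ε * ∫ x, u i x ∂μ := by
        rw [integral_add (hW_int i) ((hu i).const_mul ε), integral_const_mul]
    _ < δ / 2 + δ / 2 := by linarith [mul_le_mul_of_nonneg_left (hM i) hε.le]
    _ = δ := add_halves δ

end Integrals

section BrezisLieb

variable {X : Type*} [MeasurableSpace X] {μ : Measure X}
  {E : Type*} [NormedAddCommGroup E] {p C : ℝ} {f : ℕ → X → E} {g : X → E}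

theorem integrable_norm_sub_rpow {u v : X → E} (hp : 0 < p) (hu : AEStronglyMeasurable u μ)
    (hv : AEStronglyMeasurable v μ) (hui : Integrable (fun x => ‖u x‖ ^ p) μ)
    (hvi : Integrable (fun x => ‖v x‖ ^ p) μ) : Integrable (fun x => ‖u x - v x‖ ^ p) μ := by
  have hLp : ∀ {w : X → E}, AEStronglyMeasurable w μ →
      (Integrable (fun x => ‖w x‖ ^ p) μ ↔ MemLp w (ENNReal.ofReal p) μ) := fun hw => by
    rw [← integrable_norm_rpow_iff hw (by simpa using hp) ENNReal.ofReal_ne_top,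
      ENNReal.toReal_ofReal hp.le]
  exact (hLp (hu.sub hv)).2 (((hLp hu).1 hui).sub ((hLp hv).1 hvi))

theorem tendsto_integral_abs_norm_rpow_sub_sub (hp : 0 < p)
    (hf : ∀ i, AEStronglyMeasurable (f i) μ) (hfi : ∀ i, Integrable (fun x => ‖f i x‖ ^ p) μ)
    (hC : ∀ i, ∫ x, ‖f i x‖ ^ p ∂μ ≤ C) (hgi : Integrable (fun x => ‖g x‖ ^ p) μ)
    (hlim : ∀ᵐ x ∂μ, Tendsto (fun i => f i x) atTop (𝓝 (g x))) :
    Tendsto (fun i => ∫ x, |‖f i x‖ ^ p - ‖f i x - g x‖ ^ p - ‖g x‖ ^ p| ∂μ) atTop (𝓝 0) := by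
  have hg : AEStronglyMeasurable g μ := aestronglyMeasurable_of_tendsto_ae atTop hf hlim
  obtain ⟨C₁, hC₁⟩ := exists_norm_add_rpow_le (E := E) hp one_pos
  have hdiff_le : ∀ i x, ‖f i x - g x‖ ^ p ≤ 2 * ‖f i x‖ ^ p + C₁ * ‖g x‖ ^ p := fun i x => by
    simpa [← sub_eq_add_neg, one_add_one_eq_two] using hC₁ (f i x) (-g x)
  have hdiff_int : ∀ i, Integrable (fun x => ‖f i x - g x‖ ^ p) μ := fun i =>
    integrable_norm_sub_rpow hp (hf i) hg (hfi i) hgi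
  refine tendsto_integral_abs_of_abs_le_mul_add (u := fun i x => ‖f i x - g x‖ ^ p)
    (M := 2 * C + C₁ * ∫ x, ‖g x‖ ^ p ∂μ)
    (fun i => (((hf i).norm_rpow p).sub (((hf i).sub hg).norm_rpow p)).sub (hg.norm_rpow p))
    ?_ hdiff_int
    (fun i x => by positivity) (fun i => ?_) (fun ε hε => ?_)
  · filter_upwards [hlim] with x hx
    have hcont := Real.continuous_rpow_const (q := p) hp.le
    have hsub : Tendsto (fun i => ‖f i x - g x‖) atTop (𝓝 0) := by
      simpa using (hx.sub_const (g x)).norm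
    simpa [Real.zero_rpow hp.ne'] using
      (((hcont.tendsto _).comp hx.norm).sub ((hcont.tendsto 0).comp hsub)).sub_const (‖g x‖ ^ p)
  · calc ∫ x, ‖f i x - g x‖ ^ p ∂μ ≤ ∫ x, (2 * ‖f i x‖ ^ p + C₁ * ‖g x‖ ^ p) ∂μ :=
          integral_mono (hdiff_int i) (((hfi i).const_mul 2).add (hgi.const_mul C₁)) (hdiff_le i)
      _ = 2 * ∫ x, ‖f i x‖ ^ p ∂μ + C₁ * ∫ x, ‖g x‖ ^ p ∂μ := by
          rw [integral_add ((hfi i).const_mul 2) (hgi.const_mul C₁), integral_const_mul,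
            integral_const_mul]
      _ ≤ _ := by linarith [hC i]
  · obtain ⟨Cε, hCε⟩ := exists_abs_norm_add_rpow_sub_le (E := E) hp hε
    refine ⟨fun x => (Cε + 1) * ‖g x‖ ^ p, hgi.const_mul _, fun i x => ?_⟩
    have hfg := hCε (f i x - g x) (g x)
    rw [sub_add_cancel] at hfg
    calc |‖f i x‖ ^ p - ‖f i x - g x‖ ^ p - ‖g x‖ ^ p|
        ≤ |‖f i x‖ ^ p - ‖f i x - g x‖ ^ p| + |‖g x‖ ^ p| := abs_sub _ _
      _ ≤ ε * ‖f i x - g x‖ ^ p + (Cε + 1) * ‖g x‖ ^ p := by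
          rw [abs_of_nonneg (Real.rpow_nonneg (norm_nonneg (g x)) p)]
          linarith

theorem tendsto_integral_norm_rpow_sub_integral_norm_sub_rpow (hp : 0 < p)
    (hf : ∀ i, AEStronglyMeasurable (f i) μ) (hfi : ∀ i, Integrable (fun x => ‖f i x‖ ^ p) μ)
    (hC : ∀ i, ∫ x, ‖f i x‖ ^ p ∂μ ≤ C) (hgi : Integrable (fun x => ‖g x‖ ^ p) μ)
    (hlim : ∀ᵐ x ∂μ, Tendsto (fun i => f i x) atTop (𝓝 (g x))) :
    Tendsto (fun i => ∫ x, ‖f i x‖ ^ p ∂μ - ∫ x, ‖f i x - g x‖ ^ p ∂μ) atTop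
      (𝓝 (∫ x, ‖g x‖ ^ p ∂μ)) := by
  have hg : AEStronglyMeasurable g μ := aestronglyMeasurable_of_tendsto_ae atTop hf hlim
  have hdiff_int : ∀ i, Integrable (fun x => ‖f i x - g x‖ ^ p) μ := fun i =>
    integrable_norm_sub_rpow hp (hf i) hg (hfi i) hgi
  have h : Tendsto (fun i => ∫ x, (‖f i x‖ ^ p - ‖f i x - g x‖ ^ p - ‖g x‖ ^ p) ∂μ) atTop
      (𝓝 0) :=
    squeeze_zero_norm (fun i => norm_integral_le_integral_norm _)
      (tendsto_integral_abs_norm_rpow_sub_sub hp hf hfi hC hgi hlim)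
  rw [← zero_add (∫ x, ‖g x‖ ^ p ∂μ)]
  refine (h.add_const _).congr fun i => ?_
  have hdi : Integrable (fun x => ‖f i x‖ ^ p - ‖f i x - g x‖ ^ p) μ := (hfi i).sub (hdiff_int i)
  rw [integral_sub hdi hgi, integral_sub (hfi i) (hdiff_int i), sub_add_cancel]

end BrezisLieb

theorem stmt_11 {X : Type*} [MeasurableSpace X] (μ : Measure X)
    (p : ℝ) (hp : 0 < p) (f : ℕ → X → ℂ) (g : X → ℂ)
    (hmeas : ∀ i, AEStronglyMeasurable (f i) μ)
    (hbdd : ∃ C : ℝ, ∀ i, ∫⁻ x, ENNReal.ofReal (‖f i x‖ ^ p) ∂μ ≤ ENNReal.ofReal C)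
    (hae : ∀ᵐ x ∂μ, Tendsto (fun i => f i x) atTop (nhds (g x))) :
    (∫⁻ x, ENNReal.ofReal (‖g x‖ ^ p) ∂μ) < ⊤ ∧
    Tendsto (fun i => (∫ x, ‖f i x‖ ^ p ∂μ) - ∫ x, ‖f i x - g x‖ ^ p ∂μ)
      atTop (nhds (∫ x, ‖g x‖ ^ p ∂μ)) := by
  obtain ⟨C, hC⟩ := hbdd
  have hint : ∀ {u : X → ℂ}, AEStronglyMeasurable u μ →
      ∫⁻ x, ENNReal.ofReal (‖u x‖ ^ p) ∂μ < ⊤ → Integrable (fun x => ‖u x‖ ^ p) μ :=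
    fun hu hlt => ⟨hu.norm_rpow p,
      (hasFiniteIntegral_iff_ofReal (.of_forall fun x => by positivity)).2 hlt⟩
  have hg_lt : ∫⁻ x, ENNReal.ofReal (‖g x‖ ^ p) ∂μ < ⊤ :=
    (lintegral_le_of_tendsto_ae_of_forall_le (fun i => ((hmeas i).norm_rpow p).aemeasurable.ennreal_ofReal)
      (hae.mono fun x hx => ((ENNReal.continuous_ofReal.comp
        (Real.continuous_rpow_const hp.le)).tendsto _).comp hx.norm) hC).trans_lt
      ENNReal.ofReal_lt_top
  have hfi : ∀ i, Integrable (fun x => ‖f i x‖ ^ p) μ := fun i =>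
    hint (hmeas i) ((hC i).trans_lt ENNReal.ofReal_lt_top)
  have hf_le : ∀ i, ∫ x, ‖f i x‖ ^ p ∂μ ≤ (ENNReal.ofReal C).toReal := fun i => by
    rw [integral_eq_lintegral_of_nonneg_ae (.of_forall fun x => by positivity)
      ((hmeas i).norm_rpow p)]
    exact ENNReal.toReal_mono ENNReal.ofReal_ne_top (hC i)
  have hgi := hint (aestronglyMeasurable_of_tendsto_ae atTop hmeas hae) hg_lt
  exact ⟨hg_lt, tendsto_integral_norm_rpow_sub_integral_norm_sub_rpow hp hmeas hfi hf_le hgi hae⟩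
end
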